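/- arXiv:1501.05463 — 6 statements merged into one kernel-verified Lean document; each statement's English description precedes it below -/
import Mathlib

section
/- Let A be a C*-algebra and let a, b be self-adjoint elements of A with a ≤ b. Then the positive part a₊ is Cuntz subequivalent to b₊, i.e., there exists a sequence xₙ in A with ‖a₊ - xₙ b₊ xₙ*‖ → 0. -/
/-!
For `ε > 0` the cut-down `(a - ε)₊` is a conjugate `e a e` of `a` by a self-adjoint function `e`
of `a`, so `a ≤ b₊` gives `0 ≤ (a - ε)₊ ≤ e b₊ e`. An inequality `0 ≤ p ≤ q` is turned into an
approximate conjugation: with `r = q + ε` invertible, `y = √p · √(r⁻¹)` satisfies `p = y r y*` and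
`‖y‖ ≤ 1`, hence `‖p - y q y*‖ = ε ‖y y*‖ ≤ ε`. Finally `‖a₊ - (a - ε)₊‖ ≤ ε`.
-/

open Filter Topology

/-- Cuntz subequivalence: `a ≼ b` iff there is a sequence `xₙ` with `‖a - xₙ b xₙ*‖ → 0`. -/
def CuntzBelow {A : Type*} [CStarAlgebra A] (a b : A) : Prop :=
  ∃ x : ℕ → A, Tendsto (fun n => ‖a - x n * b * star (x n)‖) atTop (𝓝 0)

section CStarAlgebra

variable {A : Type*} [CStarAlgebra A]

lemma CuntzBelow.of_forall_exists_norm_sub_le {a b : A}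
    (h : ∀ ε > 0, ∃ x : A, ‖a - x * b * star x‖ ≤ ε) : CuntzBelow a b := by
  choose x hx using fun n : ℕ => h (1 / (n + 1)) Nat.one_div_pos_of_nat
  exact ⟨x, squeeze_zero (fun _ => norm_nonneg _) hx tendsto_one_div_add_atTop_nhds_zero_nat⟩

lemma norm_cfc_max_zero_sub_cfc_max_sub_zero_le (a : A) {ε : ℝ} (hε : 0 ≤ ε) :
    ‖cfc (fun t : ℝ => max t 0) a - cfc (fun t : ℝ => max (t - ε) 0) a‖ ≤ ε := by
  rw [← cfc_sub _ _ a (by fun_prop) (by fun_prop)]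
  refine norm_cfc_le hε fun t _ => ?_
  calc ‖max t 0 - max (t - ε) 0‖ ≤ |t - (t - ε)| := abs_max_sub_max_le_abs _ _ _
    _ = ε := by rw [sub_sub_cancel, abs_of_nonneg hε]

lemma exists_conj_eq_cfc_max_sub_zero {a : A} (ha : IsSelfAdjoint a) {ε : ℝ} (hε : 0 < ε) :
    ∃ e : A, IsSelfAdjoint e ∧ e * a * e = cfc (fun t : ℝ => max (t - ε) 0) a := by
  set g : ℝ → ℝ := fun t => Real.sqrt (max (t - ε) 0 / max t ε)
  have hg : Continuous g :=
    Real.continuous_sqrt.comp <| .div (by fun_prop) (by fun_prop) fun _ =>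
      (lt_max_of_lt_right hε).ne'
  refine ⟨cfc g a, cfc_predicate g a, ?_⟩
  calc cfc g a * a * cfc g a = cfc (fun t => g t * t * g t) a := by
        rw [cfc_mul _ g a (by fun_prop) hg.continuousOn,
          cfc_mul g (fun t => t) a hg.continuousOn, cfc_id' ℝ a ha]
    _ = _ := cfc_congr fun t _ => ?_
  have hgg : g t * g t = max (t - ε) 0 / max t ε :=
    Real.mul_self_sqrt (div_nonneg (le_max_right _ _) (hε.le.trans (le_max_right _ _)))
  rw [mul_right_comm, hgg]
  rcases le_or_gt t ε with h | h
  · rw [max_eq_right (sub_nonpos.mpr h), zero_div, zero_mul]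
  · rw [max_eq_left h.le, div_mul_cancel₀ _ (hε.trans h).ne']

end CStarAlgebra

section StarOrderedRing

variable {A : Type*} [CStarAlgebra A] [PartialOrder A] [StarOrderedRing A]

open CFC in
lemma exists_eq_conj_norm_le_one_of_le {p r : A} (hp : 0 ≤ p) (hpr : p ≤ r)
    (hr : IsStrictlyPositive r) : ∃ y : A, p = y * r * star y ∧ ‖y‖ ≤ 1 := by
  set w := sqrt (Ring.inverse r)
  have hw : IsSelfAdjoint w := .of_nonneg (sqrt_nonneg _)
  have hs : IsSelfAdjoint (sqrt p) := .of_nonneg (sqrt_nonneg p)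
  have hwrw : w * r * w = 1 := conjSqrt_ringInverse_self r
  refine ⟨sqrt p * w, ?_, ?_⟩
  · rw [star_mul, hw.star_eq, hs.star_eq,
      show sqrt p * w * r * (w * sqrt p) = sqrt p * (w * r * w) * sqrt p by noncomm_ring,
      hwrw, mul_one, sqrt_mul_sqrt_self p]
  · have hle : star (sqrt p * w) * (sqrt p * w) ≤ 1 := by
      rw [star_mul, hw.star_eq, hs.star_eq,
        show w * sqrt p * (sqrt p * w) = w * (sqrt p * sqrt p) * w by noncomm_ring,
        sqrt_mul_sqrt_self p, ← hwrw]
      exact hw.conjugate_le_conjugate hpr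
    rw [← CStarAlgebra.norm_le_one_iff_of_nonneg _ (star_mul_self_nonneg _),
      CStarRing.norm_star_mul_self] at hle
    nlinarith [norm_nonneg (sqrt p * w)]

lemma exists_norm_sub_conj_le_of_le {p q : A} (hp : 0 ≤ p) (hpq : p ≤ q) {ε : ℝ} (hε : 0 < ε) :
    ∃ y : A, ‖p - y * q * star y‖ ≤ ε := by
  have hε' : IsStrictlyPositive (algebraMap ℝ A ε) := isStrictlyPositive_algebraMap hε
  obtain ⟨y, hpy, hy⟩ := exists_eq_conj_norm_le_one_of_le hp
    (hpq.trans (le_add_of_nonneg_right hε'.nonneg))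
    (IsStrictlyPositive.nonneg_add (hp.trans hpq) hε')
  refine ⟨y, ?_⟩
  have hdiff : p - y * q * star y = ε • (y * star y) := by
    rw [hpy, Algebra.algebraMap_eq_smul_one]; noncomm_ring
  calc ‖p - y * q * star y‖ = ε * (‖y‖ * ‖y‖) := by
        rw [hdiff, norm_smul, CStarRing.norm_self_mul_star, Real.norm_of_nonneg hε.le]
    _ ≤ ε * 1 := by gcongr; nlinarith [norm_nonneg y]
    _ = ε := mul_one ε

lemma le_cfc_max_zero {b : A} (hb : IsSelfAdjoint b) : b ≤ cfc (fun t : ℝ => max t 0) b :=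
  calc b = cfc id b := (cfc_id ℝ b).symm
    _ ≤ _ := cfc_mono fun t _ => le_max_left t 0

lemma cuntzBelow_cfc_max_zero_of_le {a b : A} (ha : IsSelfAdjoint a) (hab : a ≤ b) :
    CuntzBelow (cfc (fun t : ℝ => max t 0) a) b := by
  refine .of_forall_exists_norm_sub_le fun ε hε => ?_
  obtain ⟨e, he, hea⟩ := exists_conj_eq_cfc_max_sub_zero ha (half_pos hε)
  have hp : 0 ≤ e * a * e := hea ▸ cfc_nonneg fun t _ => le_max_right _ _
  obtain ⟨y, hy⟩ := exists_norm_sub_conj_le_of_le hp (he.conjugate_le_conjugate hab) (half_pos hε)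
  refine ⟨y * e, ?_⟩
  calc ‖cfc (fun t : ℝ => max t 0) a - y * e * b * star (y * e)‖
      ≤ ‖cfc (fun t : ℝ => max t 0) a - e * a * e‖ + ‖e * a * e - y * (e * b * e) * star y‖ := by
        rw [star_mul, he.star_eq, show y * e * b * (e * star y) = y * (e * b * e) * star y by
          noncomm_ring]
        exact norm_sub_le_norm_sub_add_norm_sub _ _ _
    _ ≤ ε / 2 + ε / 2 :=
        add_le_add (hea ▸ norm_cfc_max_zero_sub_cfc_max_sub_zero_le a (half_pos hε).le) hy
    _ = ε := add_halves ε

end StarOrderedRing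

theorem stmt_0 {A : Type*} [CStarAlgebra A] [PartialOrder A] [StarOrderedRing A] (a b : A)
    (ha : IsSelfAdjoint a) (hb : IsSelfAdjoint b) (hab : a ≤ b) :
    CuntzBelow (cfc (fun t : ℝ => max t 0) a) (cfc (fun t : ℝ => max t 0) b) :=
  cuntzBelow_cfc_max_zero_of_le ha (hab.trans (le_cfc_max_zero hb))
end

section
/- Let A be a C*-algebra, let a, b be positive elements of A, and let δ₁, δ₂, δ₃ ≥ 0 with δ₁ ≥ δ₂ + δ₃. Then (a + b - δ₁)₊ is Cuntz subequivalent to (a - δ₂)₊ + (b - δ₃)₊. -/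
open Filter Topology

/-- `(a - δ)₊`, via continuous functional calculus with `t ↦ max (t - δ) 0`. -/
noncomputable def cutoff {A : Type*} [CStarAlgebra A] (a : A) (δ : ℝ) : A :=
  cfc (fun t : ℝ => max (t - δ) 0) a

/-! Since `a - δ₂ ≤ (a - δ₂)₊` and `b - δ₃ ≤ (b - δ₃)₊`, it suffices to show that `d - δ ≤ c`
and `δ ≤ δ₁` imply `(d - δ₁)₊ ≼ c`. For `δ' > δ` one has `(d - δ')₊ = w (d - δ) w ≤ w c w` with
`w = f(d)`, `f(t)² (t - δ) = (t - δ')₊`; an inequality `0 ≤ p ≤ q` gives `p ≼ q`, since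
`x = p^{1/2} (q + ε)^{-1/2}` makes `‖p - x q x*‖ ≤ ε`. Finally `(d - δ')₊ → (d - δ₁)₊` as
`δ' ↓ δ₁`, and `{p | p ≼ c}` is closed. -/

namespace CuntzBelow

variable {A : Type*} [CStarAlgebra A]

theorem iff_mem_closure {a b : A} :
    CuntzBelow a b ↔ a ∈ closure (Set.range fun x => x * b * star x) := by
  rw [mem_closure_iff_seq_limit]
  constructor
  · rintro ⟨x, hx⟩
    refine ⟨_, fun n => ⟨x n, rfl⟩, ?_⟩
    rw [tendsto_iff_norm_sub_tendsto_zero]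
    simpa only [norm_sub_rev] using hx
  · rintro ⟨y, hy, hlim⟩
    choose x hx using hy
    refine ⟨x, ?_⟩
    rw [tendsto_iff_norm_sub_tendsto_zero] at hlim
    simpa only [hx, norm_sub_rev] using hlim

theorem conj (x b : A) : CuntzBelow (x * b * star x) b :=
  iff_mem_closure.2 (subset_closure ⟨x, rfl⟩)

theorem trans {a b c : A} (hab : CuntzBelow a b) (hbc : CuntzBelow b c) : CuntzBelow a c := by
  rw [iff_mem_closure] at *
  refine closure_minimal ?_ isClosed_closure hab
  rintro _ ⟨x, rfl⟩
  refine map_mem_closure (f := fun y => x * y * star x) (by fun_prop) hbc ?_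
  rintro _ ⟨y, rfl⟩
  exact ⟨x * y, by simp only [star_mul, mul_assoc]⟩

theorem of_tendsto {ι : Type*} {l : Filter ι} [l.NeBot] {a : ι → A} {a₀ b : A}
    (ha : Tendsto a l (𝓝 a₀)) (hb : ∀ᶠ i in l, CuntzBelow (a i) b) : CuntzBelow a₀ b := by
  simp only [iff_mem_closure] at *
  exact isClosed_closure.mem_of_tendsto ha hb

end CuntzBelow

section CStarAlgebra

variable {A : Type*} [CStarAlgebra A]

lemma cfc_mul_self_mul_cfc {a : A} (ha : IsSelfAdjoint a) (f g : ℝ → ℝ)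
    (hf : ContinuousOn f (spectrum ℝ a) := by cfc_cont_tac)
    (hg : ContinuousOn g (spectrum ℝ a) := by cfc_cont_tac) :
    cfc f a * a * cfc g a = cfc (fun u => f u * u * g u) a := by
  rw [cfc_mul (fun u => f u * u) g a, cfc_mul f (fun u => u) a, cfc_id' ℝ a]

variable [PartialOrder A] [StarOrderedRing A]

lemma norm_sub_conj_sqrt_mul_le {p q y k : A} (hp : 0 ≤ p) (hpq : p ≤ q) (hk : IsSelfAdjoint k)
    (hkk : k * k = 1 - y * q * star y) :
    ‖p - (CFC.sqrt p * y) * q * star (CFC.sqrt p * y)‖ ≤ ‖k * q * k‖ := by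
  set s := CFC.sqrt p
  have hs : IsSelfAdjoint s := (CFC.sqrt_nonneg p).isSelfAdjoint
  have hss : s * s = p := CFC.sqrt_mul_sqrt_self p hp
  have hdiff : p - (s * y) * q * star (s * y) = star (k * s) * (k * s) := by
    have : star (k * s) * (k * s) = s * (k * k) * s := by
      rw [star_mul, hs.star_eq, hk.star_eq]; noncomm_ring
    rw [this, hkk, star_mul, hs.star_eq, ← hss]
    noncomm_ring
  calc ‖p - (s * y) * q * star (s * y)‖ = ‖(k * s) * star (k * s)‖ := by
        rw [hdiff, CStarRing.norm_star_mul_self, CStarRing.norm_self_mul_star]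
    _ = ‖k * p * k‖ := by rw [star_mul, hs.star_eq, hk.star_eq, ← hss]; noncomm_ring
    _ ≤ ‖k * q * k‖ :=
      CStarAlgebra.norm_le_norm_of_nonneg_of_le (hk.conjugate_nonneg hp)
        (hk.conjugate_le_conjugate hpq)

lemma exists_mul_self_eq_one_sub_conj_and_norm_le {q : A} (hq : 0 ≤ q) {t : ℝ} (ht : 0 < t) :
    ∃ y k : A, IsSelfAdjoint k ∧ k * k = 1 - y * q * star y ∧ ‖k * q * k‖ ≤ t := by
  -- `y = (q + t)^{-1/2}` and `k = (t (q + t)⁻¹)^{1/2}`, so that `k q k = t q (q + t)⁻¹`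
  set r := fun u : ℝ => √((max u 0 + t)⁻¹)
  set κ := fun u : ℝ => √(t / (max u 0 + t))
  have hr : Continuous r := by fun_prop (disch := intro; positivity)
  have hκ : Continuous κ := by fun_prop (disch := intro; positivity)
  have hqsa : IsSelfAdjoint q := .of_nonneg hq
  refine ⟨cfc r q, cfc κ q, cfc_predicate κ q, ?_, ?_⟩
  · rw [(cfc_predicate r q).star_eq]
    calc cfc κ q * cfc κ q = cfc (fun u => κ u * κ u) q :=
          (cfc_mul κ κ q hκ.continuousOn hκ.continuousOn).symm
      _ = cfc (fun u => 1 - r u * u * r u) q := cfc_congr fun u hu => ?_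
      _ = 1 - cfc r q * q * cfc r q := by
        rw [cfc_sub (fun _ => 1) (fun u => r u * u * r u) q continuousOn_const
            ((hr.mul continuous_id).mul hr).continuousOn,
          cfc_const_one ℝ q, cfc_mul_self_mul_cfc hqsa r r hr.continuousOn hr.continuousOn]
    have hu : 0 ≤ u := spectrum_nonneg_of_nonneg hq hu
    simp only [r, κ, max_eq_left hu]
    rw [Real.mul_self_sqrt (by positivity), mul_comm _ u, mul_assoc,
      Real.mul_self_sqrt (by positivity)]
    field_simp
    ring
  · rw [cfc_mul_self_mul_cfc hqsa κ κ hκ.continuousOn hκ.continuousOn]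
    refine norm_cfc_le ht.le fun u hu => ?_
    have hu : 0 ≤ u := spectrum_nonneg_of_nonneg hq hu
    simp only [κ, max_eq_left hu]
    rw [mul_comm _ u, mul_assoc, Real.mul_self_sqrt (by positivity), Real.norm_eq_abs,
      abs_of_nonneg (by positivity), mul_div_left_comm, mul_comm]
    exact mul_le_of_le_one_left ht.le ((div_le_one (by positivity)).2 (by linarith))

theorem CuntzBelow.of_le {p q : A} (hp : 0 ≤ p) (hpq : p ≤ q) : CuntzBelow p q := by
  rw [CuntzBelow.iff_mem_closure, Metric.mem_closure_iff]
  intro ε hε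
  obtain ⟨y, k, hk, hkk, hkq⟩ :=
    exists_mul_self_eq_one_sub_conj_and_norm_le (hp.trans hpq) (half_pos hε)
  refine ⟨_, ⟨CFC.sqrt p * y, rfl⟩, ?_⟩
  rw [dist_eq_norm]
  linarith [norm_sub_conj_sqrt_mul_le hp hpq hk hkk]

end CStarAlgebra

section Cutoff

variable {A : Type*} [CStarAlgebra A]

lemma lipschitzWith_cutoff (a : A) : LipschitzWith 1 (cutoff a) := by
  refine LipschitzWith.of_dist_le_mul fun δ δ' => ?_
  rw [dist_eq_norm, cutoff, cutoff, ← cfc_sub _ _ a, NNReal.coe_one, one_mul, Real.dist_eq]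
  refine norm_cfc_le (abs_nonneg _) fun u _ => ?_
  rw [Real.norm_eq_abs]
  exact (abs_max_sub_max_le_abs _ _ _).trans_eq (by rw [sub_sub_sub_cancel_left, abs_sub_comm])

lemma sub_algebraMap_eq_cfc {a : A} (ha : IsSelfAdjoint a) (δ : ℝ) :
    a - algebraMap ℝ A δ = cfc (fun u => u - δ) a := by
  rw [cfc_sub _ _ a, cfc_id' ℝ a, cfc_const δ a]

lemma cutoff_eq_conj {a : A} (ha : IsSelfAdjoint a) {δ δ₁ : ℝ} (hδ : δ < δ₁) :
    ∃ w : A, IsSelfAdjoint w ∧ cutoff a δ₁ = w * (a - algebraMap ℝ A δ) * w := by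
  -- `f(u)² = (u - δ₁)₊ / (u - δ)`; clamping the denominator at `δ₁ - δ` keeps `f` continuous
  set f := fun u : ℝ => √(max (u - δ₁) 0 / max (u - δ) (δ₁ - δ))
  have hf : Continuous f := by
    fun_prop (disch := intro; exact (lt_max_of_lt_right (sub_pos.2 hδ)).ne')
  refine ⟨cfc f a, cfc_predicate f a, ?_⟩
  rw [sub_algebraMap_eq_cfc ha, ← cfc_mul f _ a hf.continuousOn (by fun_prop),
    ← cfc_mul _ f a (by fun_prop) hf.continuousOn]
  refine cfc_congr fun u _ => ?_
  rw [mul_comm, ← mul_assoc, Real.mul_self_sqrt (by positivity)]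
  rcases le_or_gt δ₁ u with hu | hu
  · rw [max_eq_left (by linarith : δ₁ - δ ≤ u - δ), div_mul_cancel₀ _ (by linarith)]
  · rw [max_eq_right (by linarith : u - δ₁ ≤ 0), zero_div, zero_mul]

variable [PartialOrder A] [StarOrderedRing A]

lemma cutoff_nonneg (a : A) (δ : ℝ) : 0 ≤ cutoff a δ :=
  cfc_nonneg fun _ _ => le_max_right _ _

lemma sub_algebraMap_le_cutoff {a : A} (ha : IsSelfAdjoint a) (δ : ℝ) :
    a - algebraMap ℝ A δ ≤ cutoff a δ := by
  rw [sub_algebraMap_eq_cfc ha]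
  exact cfc_mono fun _ _ => le_max_left _ _

theorem CuntzBelow.cutoff_of_sub_algebraMap_le {a c : A} (ha : IsSelfAdjoint a) {δ δ₁ : ℝ}
    (hδ : δ ≤ δ₁) (h : a - algebraMap ℝ A δ ≤ c) : CuntzBelow (cutoff a δ₁) c := by
  refine .of_tendsto ((lipschitzWith_cutoff a).continuous.continuousWithinAt (s := Set.Ioi δ₁)) ?_
  filter_upwards [self_mem_nhdsWithin] with δ' hδ'
  obtain ⟨w, hw, hconj⟩ := cutoff_eq_conj ha (hδ.trans_lt hδ')
  have hle : cutoff a δ' ≤ w * c * star w := by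
    rw [hconj, hw.star_eq]
    exact hw.conjugate_le_conjugate h
  exact (of_le (cutoff_nonneg a δ') hle).trans (conj w c)

end Cutoff

theorem stmt_1_general {A : Type*} [CStarAlgebra A] [PartialOrder A] [StarOrderedRing A] (a b : A) (ha : 0 ≤ a) (hb : 0 ≤ b)
    (δ₁ δ₂ δ₃ : ℝ) (h1 : δ₂ + δ₃ ≤ δ₁) :
    CuntzBelow (cutoff (a + b) δ₁) (cutoff a δ₂ + cutoff b δ₃) := by
  refine CuntzBelow.cutoff_of_sub_algebraMap_le (.of_nonneg (add_nonneg ha hb)) h1 ?_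
  rw [map_add, add_sub_add_comm]
  exact add_le_add (sub_algebraMap_le_cutoff (.of_nonneg ha) δ₂)
    (sub_algebraMap_le_cutoff (.of_nonneg hb) δ₃)

theorem stmt_1 {A : Type*} [CStarAlgebra A] [PartialOrder A] [StarOrderedRing A] (a b : A) (ha : 0 ≤ a) (hb : 0 ≤ b)
    (δ₁ δ₂ δ₃ : ℝ) (h2 : 0 ≤ δ₂) (h3 : 0 ≤ δ₃) (h1 : δ₂ + δ₃ ≤ δ₁) :
    CuntzBelow (cutoff (a + b) δ₁) (cutoff a δ₂ + cutoff b δ₃) :=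
  stmt_1_general a b ha hb δ₁ δ₂ δ₃ h1
end

section
/- Let A be a C*-algebra, let a be a positive element of A, let q be a projection in A, and let δ > 0. If q is Cuntz subequivalent to (a - δ)₊, then there exists a projection p in A with p Murray–von Neumann equivalent to q and a ≥ δ·p. -/
/-!
Write `(a - δ)₊ = b²` with `b` self-adjoint and pick `x` with `‖q - x b² x*‖ < 1`. Then `z = q x b`
satisfies `‖q - z z*‖ < 1`, so `m = 1 - q + z z*` has positive spectrum and commutes with `q`, and
`v = m^(-1/2) z` satisfies `v v* = q`. Since `b` lives on the part of the spectrum of `a` above `δ`,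
`e = min(a, δ)` satisfies `b e = δ b`, hence `p e = δ p` for `p = v* v`. Then
`e - δ p = (1 - p) e (1 - p) ≥ 0`, so `δ p ≤ e ≤ a`.
-/

open Filter Topology

lemma isStarProjection_star_mul_self_of_mul_star_self_mul {R : Type*} [Semigroup R] [StarMul R]
    {v : R} (hv : v * star v * v = v) : IsStarProjection (star v * v) where
  isIdempotentElem := by
    rw [IsIdempotentElem, mul_assoc, ← mul_assoc v, hv]
  isSelfAdjoint := .star_mul_self v

section CStarAlgebra

variable {A : Type*} [CStarAlgebra A]

lemma IsStarProjection.norm_mul_mul_self_le {q : A} (hq : IsStarProjection q) (x : A) :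
    ‖q * x * q‖ ≤ ‖x‖ :=
  calc ‖q * x * q‖ ≤ ‖q‖ * ‖x‖ * ‖q‖ := norm_mul₃_le
    _ ≤ 1 * ‖x‖ * 1 := by gcongr <;> exact hq.norm_le
    _ = ‖x‖ := by ring

lemma IsStarProjection.norm_sub_mul_mul_star_le {q : A} (hq : IsStarProjection q) (x b : A) :
    ‖q - q * x * b * star (q * x * b)‖ ≤ ‖q - x * (b * star b) * star x‖ := by
  have : q - q * x * b * star (q * x * b) = q * (q - x * (b * star b) * star x) * q := by
    rw [mul_sub, sub_mul, hq.isIdempotentElem.eq, hq.isIdempotentElem.eq]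
    simp only [star_mul, hq.isSelfAdjoint.star_eq]
    noncomm_ring
  exact this ▸ hq.norm_mul_mul_self_le _

lemma pos_of_mem_spectrum_of_norm_one_sub_lt_one {m : A} (h : ‖1 - m‖ < 1) {t : ℝ}
    (ht : t ∈ spectrum ℝ m) : 0 < t := by
  rcases subsingleton_or_nontrivial A with _ | _
  · simp [spectrum.of_subsingleton] at ht
  have h1 : 1 - t ∈ spectrum ℝ (algebraMap ℝ A 1 - m) := by
    rw [← spectrum.singleton_sub_eq]
    exact Set.sub_mem_sub rfl ht
  rw [map_one] at h1
  have := (spectrum.norm_le_norm_of_mem h1).trans_lt h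
  rw [Real.norm_eq_abs, abs_lt] at this
  linarith

lemma IsSelfAdjoint.exists_mul_mul_self_eq_one {m : A} (hm : IsSelfAdjoint m) (h : ‖1 - m‖ < 1) :
    ∃ s : A, IsSelfAdjoint s ∧ s * m * s = 1 ∧ ∀ b : A, Commute m b → Commute s b := by
  have hpos := fun t (ht : t ∈ spectrum ℝ m) => pos_of_mem_spectrum_of_norm_one_sub_lt_one h ht
  have hcont : ContinuousOn (fun t : ℝ => (√t)⁻¹) (spectrum ℝ m) :=
    Real.continuous_sqrt.continuousOn.inv₀ fun t ht => (Real.sqrt_pos.2 (hpos t ht)).ne'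
  refine ⟨cfc (fun t : ℝ => (√t)⁻¹) m, cfc_predicate _ m, ?_, fun b hb => hb.cfc_real _⟩
  conv_lhs => enter [1, 2]; rw [← cfc_id' ℝ m]
  rw [← cfc_mul .., ← cfc_mul .., ← cfc_one ℝ m]
  refine cfc_congr fun t ht => ?_
  have ht' : √t ≠ 0 := (Real.sqrt_pos.2 (hpos t ht)).ne'
  simp only [Pi.one_apply]
  field_simp
  exact (Real.sq_sqrt (hpos t ht).le).symm

lemma IsStarProjection.exists_mul_star_eq_of_norm_sub_lt_one {q z : A} (hq : IsStarProjection q)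
    (hqz : q * z = z) (h : ‖q - z * star z‖ < 1) :
    ∃ y : A, y * z * star (y * z) = q ∧ q * (y * z) = y * z := by
  have hzq : star z * q = star z := by rw [← hq.isSelfAdjoint.star_eq, ← star_mul, hqz]
  set m := 1 - q + z * star z
  have hqm : q * m = z * star z := by
    simp only [m, mul_add, mul_sub, mul_one, hq.isIdempotentElem.eq, sub_self, zero_add, ← mul_assoc, hqz]
  have hmq : m * q = z * star z := by
    simp only [m, add_mul, sub_mul, one_mul, hq.isIdempotentElem.eq, sub_self, zero_add, mul_assoc, hzq]
  have hm : IsSelfAdjoint m :=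
    ((IsSelfAdjoint.one A).sub hq.isSelfAdjoint).add (.mul_star_self z)
  obtain ⟨s, hs, hsm, hcomm⟩ := hm.exists_mul_mul_self_eq_one <| by
    rwa [show 1 - m = q - z * star z by simp only [m]; abel]
  have hsq : Commute s q := hcomm q (hqm.trans hmq.symm).symm
  refine ⟨s, ?_, by rw [← mul_assoc, ← hsq.eq, mul_assoc, hqz]⟩
  calc s * z * star (s * z) = s * (m * q) * s := by
        rw [hmq, star_mul, hs.star_eq]; noncomm_ring
    _ = s * m * (q * s) := by noncomm_ring
    _ = s * m * s * q := by rw [← hsq.eq]; noncomm_ring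
    _ = q := by rw [hsm, one_mul]

lemma cutoff_eq_mul_self (a : A) (δ : ℝ) :
    cutoff a δ = cfc (fun t : ℝ => √(max (t - δ) 0)) a * cfc (fun t : ℝ => √(max (t - δ) 0)) a := by
  rw [cutoff, ← cfc_mul ..]
  exact cfc_congr fun t _ => (Real.mul_self_sqrt (le_max_right _ _)).symm

lemma cfc_sqrt_cutoff_mul_cfc_min (a : A) (δ : ℝ) :
    cfc (fun t : ℝ => √(max (t - δ) 0)) a * cfc (fun t : ℝ => min t δ) a =
      δ • cfc (fun t : ℝ => √(max (t - δ) 0)) a := by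
  rw [← cfc_mul .., ← cfc_smul ..]
  refine cfc_congr fun t _ => ?_
  rcases le_total t δ with htδ | hδt
  · simp [max_eq_right (sub_nonpos.2 htδ)]
  · rw [min_eq_right hδt, smul_eq_mul, mul_comm]

variable [PartialOrder A] [StarOrderedRing A]

lemma cfc_min_le {a : A} (ha : IsSelfAdjoint a) (δ : ℝ) : cfc (fun t : ℝ => min t δ) a ≤ a := by
  conv_rhs => rw [← cfc_id ℝ a]
  exact cfc_mono fun t _ => min_le_left t δ

lemma cfc_min_nonneg {a : A} (ha : 0 ≤ a) {δ : ℝ} (hδ : 0 ≤ δ) :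
    0 ≤ cfc (fun t : ℝ => min t δ) a :=
  cfc_nonneg fun _ ht => le_min (spectrum_nonneg_of_nonneg ha ht) hδ

lemma IsStarProjection.smul_le_of_mul_eq_smul {p e : A} (hp : IsStarProjection p) (he : 0 ≤ e)
    {δ : ℝ} (hpe : p * e = δ • p) : δ • p ≤ e := by
  have hep : e * p = δ • p := by
    simpa [star_mul, hp.isSelfAdjoint.star_eq, he.isSelfAdjoint.star_eq] using congrArg star hpe
  have key : (1 - p) * e * (1 - p) = e - δ • p := by
    calc (1 - p) * e * (1 - p) = e - p * e - (e * p - p * e * p) := by noncomm_ring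
      _ = e - δ • p := by rw [hpe, hep, smul_mul_assoc, hp.isIdempotentElem.eq, sub_self, sub_zero]
  rw [← sub_nonneg, ← key]
  simpa only [hp.one_sub.isSelfAdjoint.star_eq] using star_left_conjugate_nonneg he (1 - p)

end CStarAlgebra

theorem stmt_2 {A : Type*} [CStarAlgebra A] [PartialOrder A] [StarOrderedRing A] (a q : A) (ha : 0 ≤ a)
    (hq₁ : star q = q) (hq₂ : q * q = q) (δ : ℝ) (hδ : 0 < δ)
    (h : CuntzBelow q (cutoff a δ)) :
    ∃ p : A, star p = p ∧ p * p = p ∧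
      (∃ v : A, v * star v = p ∧ star v * v = q) ∧ δ • p ≤ a := by
  have hq : IsStarProjection q := ⟨hq₂, hq₁⟩
  obtain ⟨x, hx⟩ := h
  obtain ⟨n, hn⟩ := (hx.eventually (gt_mem_nhds one_pos)).exists
  set b := cfc (fun t : ℝ => √(max (t - δ) 0)) a
  set e := cfc (fun t : ℝ => min t δ) a
  set z := q * x n * b
  have hb : star b = b := (cfc_predicate _ a : IsSelfAdjoint b).star_eq
  have hbb : cutoff a δ = b * b := cutoff_eq_mul_self a δ
  have hbe : b * e = δ • b := cfc_sqrt_cutoff_mul_cfc_min a δ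
  have hqz : q * z = z := by simp only [z, ← mul_assoc, hq₂]
  have hz : ‖q - z * star z‖ < 1 :=
    (hq.norm_sub_mul_mul_star_le (x n) b).trans_lt (by rwa [hb, ← hbb])
  obtain ⟨y, hvv, hqv⟩ := hq.exists_mul_star_eq_of_norm_sub_lt_one hqz hz
  set v := y * z
  have hp : IsStarProjection (star v * v) :=
    isStarProjection_star_mul_self_of_mul_star_self_mul (by rw [hvv, hqv])
  have hve : v * e = δ • v := by
    simp only [v, z, mul_assoc, hbe, mul_smul_comm]
  refine ⟨star v * v, hp.isSelfAdjoint, hp.isIdempotentElem,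
    ⟨star v, by rw [star_star], by rw [star_star, hvv]⟩, ?_⟩
  calc δ • (star v * v) ≤ e :=
        hp.smul_le_of_mul_eq_smul (cfc_min_nonneg ha hδ.le) (by rw [mul_assoc, hve, mul_smul_comm])
    _ ≤ a := cfc_min_le ha.isSelfAdjoint δ
end

section
/- Let A be a C*-algebra and let p ∈ A be a projection. Suppose that every self-adjoint element b of the corner pAp can be written as b = Σ_{j=1}^{N} λⱼ qⱼ with real scalars λⱼ satisfying Σ|λⱼ| ≤ V‖b‖ and projections qⱼ ≤ p, where V ≥ 1 is a fixed constant. Then for every self-adjoint b ∈ pAp with ‖b‖ ≤ 1/V, the element p + b is a positive linear combination of N + 1 projections: p + b = Σ_{k=1}^{N+1} μₖ rₖ with μₖ ≥ 0 and projections rₖ in A. -/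
theorem stmt_9 {A : Type*} [CStarAlgebra A] [PartialOrder A] [StarOrderedRing A] (p : A)
    (hp₁ : star p = p) (hp₂ : p * p = p) (V : ℝ) (hV : 1 ≤ V) (N : ℕ)
    (hdecomp : ∀ b : A, p * b * p = b → IsSelfAdjoint b →
      ∃ (c : Fin N → ℝ) (q : Fin N → A),
        (∀ j, star (q j) = q j ∧ q j * q j = q j ∧ p * q j * p = q j) ∧
        b = ∑ j, c j • q j ∧ ∑ j, |c j| ≤ V * ‖b‖)
    (b : A) (hb : p * b * p = b) (hbsa : IsSelfAdjoint b) (hbn : ‖b‖ ≤ 1 / V) :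
    ∃ (μ : Fin (N + 1) → ℝ) (r : Fin (N + 1) → A),
      (∀ k, 0 ≤ μ k ∧ star (r k) = r k ∧ r k * r k = r k) ∧
      p + b = ∑ k, μ k • r k := by
  obtain ⟨c, q, hq, hbeq, hcsum⟩ := hdecomp b hb hbsa
  have hV0 : (0:ℝ) < V := lt_of_lt_of_le one_pos hV
  -- pq = q and qp = q
  have hpq : ∀ j, p * q j = q j := by
    intro j
    conv_lhs => rw [← (hq j).2.2]
    rw [show p * (p * q j * p) = (p * p) * q j * p by noncomm_ring, hp₂, (hq j).2.2]
  have hqp : ∀ j, q j * p = q j := by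
    intro j
    conv_lhs => rw [← (hq j).2.2]
    rw [show (p * q j * p) * p = p * q j * (p * p) by noncomm_ring, hp₂, (hq j).2.2]
  set s : ℝ := ∑ j, (|c j| - c j) / 2 with hs
  have hs0 : 0 ≤ s := Finset.sum_nonneg fun j _ => by
    have := le_abs_self (c j); linarith
  have hs1 : s ≤ 1 := by
    have h1 : s ≤ ∑ j, |c j| := Finset.sum_le_sum fun j _ => by
      have := neg_abs_le (c j); linarith
    have h2 : V * ‖b‖ ≤ 1 := by
      calc V * ‖b‖ ≤ V * (1 / V) := by
            exact mul_le_mul_of_nonneg_left hbn (le_of_lt hV0)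
        _ = 1 := by field_simp
    linarith
  refine ⟨Fin.snoc (fun j => |c j|) (1 - s),
    Fin.snoc (fun j => if 0 ≤ c j then q j else p - q j) p, ?_, ?_⟩
  · intro k
    refine Fin.lastCases ?_ ?_ k
    · simp only [Fin.snoc_last]
      exact ⟨by linarith, hp₁, hp₂⟩
    · intro j
      simp only [Fin.snoc_castSucc]
      refine ⟨abs_nonneg _, ?_, ?_⟩
      · split
        · exact (hq j).1
        · simp [star_sub, hp₁, (hq j).1]
      · split
        · exact (hq j).2.1
        · rw [sub_mul, mul_sub, mul_sub, hp₂, hpq, hqp, (hq j).2.1]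
          abel
  · rw [Fin.sum_univ_castSucc]
    simp only [Fin.snoc_castSucc, Fin.snoc_last]
    have hterm : ∀ j, |c j| • (if 0 ≤ c j then q j else p - q j)
        = c j • q j + ((|c j| - c j) / 2) • p := by
      intro j
      by_cases h : 0 ≤ c j
      · simp [h, abs_of_nonneg h]
      · push_neg at h
        rw [if_neg (not_le.mpr h), abs_of_neg h, smul_sub]
        module
    rw [Finset.sum_congr rfl fun j _ => hterm j, Finset.sum_add_distrib,
      ← Finset.sum_smul, ← hs, ← hbeq, sub_smul, one_smul]
    abel
end

section
/- Let b be a positive element of a unital C*-algebra with ‖b‖ ≤ 1, suppose q is a projection with qb = bq = b, and v is a partial isometry with v*v = q and vv* = p', where p' is a projection orthogonal to q. Then r := b + v√(b − b²) + √(b − b²)v* + p' − v b v* is a projection. -/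
theorem stmt_10 {A : Type*} [CStarAlgebra A] [PartialOrder A] [StarOrderedRing A] (b q v p' : A)
    (hb : 0 ≤ b) (hbn : ‖b‖ ≤ 1)
    (hq₁ : star q = q) (hq₂ : q * q = q) (hqb : q * b = b) (hbq : b * q = b)
    (hp₁ : star p' = p') (hp₂ : p' * p' = p')
    (hv₁ : star v * v = q) (hv₂ : v * star v = p') (horth : p' * q = 0) :
    let s := cfc (fun t : ℝ => Real.sqrt t) (b - b * b)
    let r := b + v * s + s * star v + p' - v * b * star v
    star r = r ∧ r * r = r := by
  intro s r
  nontriviality A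
  have hbsa : IsSelfAdjoint b := .of_nonneg hb
  have hspec : ∀ x ∈ spectrum ℝ b, 0 ≤ x ∧ x ≤ 1 := by
    intro x hx
    refine ⟨spectrum_nonneg_of_nonneg hb hx, ?_⟩
    calc x ≤ ‖x‖ := le_abs_self x
      _ ≤ ‖b‖ := spectrum.norm_le_norm_of_mem hx
      _ ≤ 1 := hbn
  have haeq : cfc (fun t : ℝ => t - t * t) b = b - b * b := by
    rw [cfc_sub _ _ b, cfc_mul _ _ b (by fun_prop) (by fun_prop), cfc_id' ℝ b hbsa]
  have ha : (0 : A) ≤ b - b * b := by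
    rw [← haeq]
    exact cfc_nonneg fun x hx => by nlinarith [(hspec x hx).1, (hspec x hx).2]
  have hs_sa : star s = s :=
    (IsSelfAdjoint.cfc (f := fun t : ℝ => Real.sqrt t) (a := b - b * b))
  have hss : s * s = b - b * b := by
    show cfc _ _ * cfc _ _ = _
    rw [← cfc_mul (fun x : ℝ => Real.sqrt x) (fun x : ℝ => Real.sqrt x) (b - b * b)
      (by fun_prop) (by fun_prop)]
    have : cfc (fun x : ℝ => Real.sqrt x * Real.sqrt x) (b - b * b)
        = cfc (id : ℝ → ℝ) (b - b * b) := by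
      apply cfc_congr
      intro x hx
      exact Real.mul_self_sqrt (spectrum_nonneg_of_nonneg ha hx)
    rw [this, cfc_id ℝ (b - b * b) ha.isSelfAdjoint]
  -- q absorbs s
  have hqa : q * (b - b * b) = b - b * b := by
    rw [mul_sub, hqb, ← mul_assoc, hqb]
  have hqs : q * s = s := by
    have hx : ((1 : A) - q) * s * star ((1 - q) * s) = 0 := by
      rw [star_mul, hs_sa, star_sub, star_one, hq₁]
      calc (1 - q) * s * (s * (1 - q)) = (1 - q) * (s * s) * (1 - q) := by noncomm_ring
        _ = 0 := by rw [hss, sub_mul, one_mul, hqa, sub_self, zero_mul]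
    have h1 := (CStarRing.mul_star_self_eq_zero_iff _).mp hx
    have h2 : s - q * s = 0 := by rwa [sub_mul, one_mul] at h1
    exact (sub_eq_zero.mp h2).symm
  have hsq : s * q = s := by
    have := congrArg star hqs
    rwa [star_mul, hq₁, hs_sa] at this
  -- b commutes with s
  have hbs : b * s = s * b := by
    have hcomp : s = cfc (fun t : ℝ => Real.sqrt (t - t * t)) b := by
      show cfc _ (b - b * b) = _
      rw [← haeq, ← cfc_comp' (fun t : ℝ => Real.sqrt t) (fun t : ℝ => t - t * t) b
        (by fun_prop) (by fun_prop) hbsa]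
    have := cfc_commute_cfc (id : ℝ → ℝ) (fun t : ℝ => Real.sqrt (t - t * t)) b
    rw [cfc_id ℝ b hbsa] at this
    rw [hcomp]
    exact this
  -- p' v = v
  have hp'v : p' * v = v := by
    have hx : (v - p' * v) * star (v - p' * v) = 0 := by
      rw [star_sub, star_mul, hp₁]
      calc (v - p' * v) * (star v - star v * p')
          = v * star v - (v * star v) * p' - p' * (v * star v) + p' * (v * star v) * p' := by
            noncomm_ring
        _ = 0 := by rw [hv₂, hp₂]; noncomm_ring [hp₂]
    have h1 := (CStarRing.mul_star_self_eq_zero_iff _).mp hx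
    exact (sub_eq_zero.mp h1).symm
  have hvp' : star v * p' = star v := by
    have := congrArg star hp'v
    rwa [star_mul, hp₁] at this
  have hvq : v * q = v := by rw [← hv₁, ← mul_assoc, hv₂, hp'v]
  have hqv : q * star v = star v := by
    have := congrArg star hvq
    rwa [star_mul, hq₁] at this
  have hqp' : q * p' = 0 := by
    have := congrArg star horth
    rwa [star_mul, hq₁, hp₁, star_zero] at this
  -- zero relations
  have hbp' : b * p' = 0 := by rw [← hbq, mul_assoc, hqp', mul_zero]
  have hp'b : p' * b = 0 := by
    have := congrArg star hbp'
    rwa [star_mul, hp₁, hbsa.star_eq, star_zero] at this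
  have hsp' : s * p' = 0 := by rw [← hsq, mul_assoc, hqp', mul_zero]
  have hp's : p' * s = 0 := by
    have := congrArg star hsp'
    rwa [star_mul, hp₁, hs_sa, star_zero] at this
  have hbv : b * v = 0 := by rw [← hp'v, ← mul_assoc, hbp', zero_mul]
  have hvb : star v * b = 0 := by
    have := congrArg star hbv
    rwa [star_mul, hbsa.star_eq, star_zero] at this
  have hsv : s * v = 0 := by rw [← hp'v, ← mul_assoc, hsp', zero_mul]
  have hvs : star v * s = 0 := by
    have := congrArg star hsv
    rwa [star_mul, hs_sa, star_zero] at this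
  constructor
  · show star (b + v * s + s * star v + p' - v * b * star v) = _
    simp only [star_sub, star_add, star_mul, star_star, hs_sa, hp₁, hq₁, hbsa.star_eq]
    show _ = b + v * s + s * star v + p' - v * b * star v
    rw [mul_assoc v b]
    abel
  · show (b + v * s + s * star v + p' - v * b * star v) *
        (b + v * s + s * star v + p' - v * b * star v) = _
    have z : ∀ x y z : A, x * y = 0 → x * (y * z) = 0 := fun x y z h => by
      rw [← mul_assoc, h, zero_mul]
    have e : ∀ x y w z : A, x * y = w → x * (y * z) = w * z := fun x y w z h => by
      rw [← mul_assoc, h]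
    simp only [mul_add, add_mul, mul_sub, sub_mul, mul_assoc,
      z _ _ _ hbv, z _ _ _ hvb, z _ _ _ hsv, z _ _ _ hvs, z _ _ _ hbp', z _ _ _ hp'b,
      z _ _ _ hsp', z _ _ _ hp's, z _ _ _ hqp',
      e _ _ _ _ hv₁, e _ _ _ _ hv₂, e _ _ _ _ hqs, e _ _ _ _ hqb, e _ _ _ _ hqv,
      e _ _ _ _ hp'v, e _ _ _ _ hp₂, e _ _ _ _ hvp', hvp', e _ _ _ _ hbs, e _ _ _ _ hss,
      hbv, hvb, hsv, hvs, hbp', hp'b, hsp', hp's, hv₁, hv₂, hqs, hqb, hp'v, hp₂, hbs, hss,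
      mul_zero, zero_mul, add_zero, zero_add, sub_zero, zero_sub, mul_sub, sub_mul]
    show _ = b + v * s + s * star v + p' - v * b * star v
    simp only [mul_assoc]
    abel
end

section
/- Let A be a σ-unital C*-algebra, and let Tₙ, T be normal elements of the multiplier algebra M(A) whose spectra are all contained in a fixed compact set K ⊆ ℂ. If Tₙ → T in the strict topology, then f(Tₙ) → f(T) in the strict topology for every continuous function f : K → ℂ. -/
/-! For each normal `x` with spectrum in `K`, `g ↦ g(x)` is a contractive ⋆-homomorphism
`C(K, ℂ) → 𝓜(ℂ, A)`. The continuous `g` for which `g(Tₙ) → g(T)` strictly therefore form a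
⋆-subalgebra: sums and adjoints are immediate, and products go through because the factors are
uniformly bounded by `‖g‖` and `A` is an ideal in `𝓜(ℂ, A)`. Contractivity also makes this
subalgebra closed in the sup norm. It contains `z ↦ z`, so by Stone–Weierstrass it is all of
`C(K, ℂ)`. -/

open Filter Topology
open scoped MultiplierAlgebra

def StrictTendsto {A : Type*} [NonUnitalCStarAlgebra A]
    (T : ℕ → 𝓜(ℂ, A)) (L : 𝓜(ℂ, A)) : Prop :=
  ∀ a : A,
    Tendsto (fun n => ‖(T n - L) * (a : 𝓜(ℂ, A))‖) atTop (𝓝 0) ∧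
    Tendsto (fun n => ‖(a : 𝓜(ℂ, A)) * (T n - L)‖) atTop (𝓝 0)

/-- `A` is σ-unital: it admits a countable (sequential) approximate identity. -/
def SigmaUnital (A : Type*) [NonUnitalCStarAlgebra A] : Prop :=
  ∃ e : ℕ → A, ∀ a : A,
    Tendsto (fun n => ‖a - a * e n‖) atTop (𝓝 0) ∧
    Tendsto (fun n => ‖a - e n * a‖) atTop (𝓝 0)

namespace DoubleCentralizer

variable {𝕜 A : Type*} [NontriviallyNormedField 𝕜] [NonUnitalNormedRing A] [NormedSpace 𝕜 A]
  [SMulCommClass 𝕜 A A] [IsScalarTower 𝕜 A A] [StarRing A] [CStarRing A]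

theorem fst_mul (x : 𝓜(𝕜, A)) (a b : A) : x.fst (a * b) = x.fst a * b := by
  have h : ∀ c : A, c * (x.fst (a * b) - x.fst a * b) = 0 := fun c => by
    rw [mul_sub, ← x.central c (a * b), ← mul_assoc, x.central c a, mul_assoc, sub_self]
  -- take `c` to be the adjoint of the difference
  exact sub_eq_zero.mp ((CStarRing.star_mul_self_eq_zero_iff _).mp (h _))

theorem mul_coe (x : 𝓜(𝕜, A)) (a : A) : x * (a : 𝓜(𝕜, A)) = (x.fst a : 𝓜(𝕜, A)) := by
  refine DoubleCentralizer.ext _ _ _ _ (Prod.ext (ContinuousLinearMap.ext fun b => ?_)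
    (ContinuousLinearMap.ext fun b => ?_))
  · exact x.fst_mul a b
  · exact x.central b a

end DoubleCentralizer

section StrictTendsto

variable {A : Type*} [NonUnitalCStarAlgebra A] {S S' : ℕ → 𝓜(ℂ, A)} {L L' : 𝓜(ℂ, A)}

def RightStrictTendsto (S : ℕ → 𝓜(ℂ, A)) (L : 𝓜(ℂ, A)) : Prop :=
  ∀ a : A, Tendsto (fun n => ‖(S n - L) * (a : 𝓜(ℂ, A))‖) atTop (𝓝 0)

theorem strictTendsto_iff_rightStrictTendsto_and_star :
    StrictTendsto S L ↔
      RightStrictTendsto S L ∧ RightStrictTendsto (fun n => star (S n)) (star L) := by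
  have hstar : ∀ (a : A) n, ‖(a : 𝓜(ℂ, A)) * (S n - L)‖ =
      ‖(star (S n) - star L) * ((star a : A) : 𝓜(ℂ, A))‖ := fun a n => by
    have hcoe : ((star a : A) : 𝓜(ℂ, A)) = star (a : 𝓜(ℂ, A)) :=
      map_star (DoubleCentralizer.coeHom (𝕜 := ℂ) (A := A)) a
    rw [hcoe, ← star_sub, ← star_mul, norm_star]
  refine ⟨fun h => ⟨fun a => (h a).1, fun a => ?_⟩, fun ⟨h, h'⟩ a => ⟨h a, ?_⟩⟩
  · simpa only [hstar, star_star] using (h (star a)).2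
  · simpa only [hstar] using h' (star a)

theorem RightStrictTendsto.add (h : RightStrictTendsto S L) (h' : RightStrictTendsto S' L') :
    RightStrictTendsto (fun n => S n + S' n) (L + L') := fun a =>
  squeeze_zero (g := fun n => ‖(S n - L) * (a : 𝓜(ℂ, A))‖ + ‖(S' n - L') * (a : 𝓜(ℂ, A))‖)
    (fun _ => norm_nonneg _) (fun n => by rw [add_sub_add_comm, add_mul]; exact norm_add_le _ _)
    (by simpa using (h a).add (h' a))

theorem RightStrictTendsto.mul (h : RightStrictTendsto S L) (h' : RightStrictTendsto S' L')
    {M : ℝ} (hM : ∀ n, ‖S n‖ ≤ M) : RightStrictTendsto (fun n => S n * S' n) (L * L') := by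
  intro a
  have hsplit : ∀ n, (S n * S' n - L * L') * (a : 𝓜(ℂ, A)) =
      S n * ((S' n - L') * a) + (S n - L) * ((L'.fst a : A) : 𝓜(ℂ, A)) := fun n => by
    rw [← DoubleCentralizer.mul_coe]
    noncomm_ring
  refine squeeze_zero (fun _ => norm_nonneg _) (fun n => ?_)
    (by simpa using ((h' a).const_mul M).add (h (L'.fst a)))
  rw [hsplit]
  refine (norm_add_le _ _).trans (add_le_add ((norm_mul_le _ _).trans ?_) le_rfl)
  gcongr
  exact hM n

theorem RightStrictTendsto.of_uniform_approx
    (h : ∀ ε > 0, ∃ S' L', RightStrictTendsto S' L' ∧ (∀ n, ‖S n - S' n‖ ≤ ε) ∧ ‖L - L'‖ ≤ ε) :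
    RightStrictTendsto S L := by
  intro a
  rw [Metric.tendsto_atTop]
  intro δ hδ
  set c := ‖(a : 𝓜(ℂ, A))‖
  have hε : 0 < δ / (3 * (c + 1)) := by positivity
  have hεc : δ / (3 * (c + 1)) * c ≤ δ / 3 := by
    rw [div_mul_eq_mul_div, div_le_div_iff₀ (by positivity) (by positivity)]
    nlinarith
  obtain ⟨S', L', hS', hSS', hLL'⟩ := h _ hε
  obtain ⟨N, hN⟩ := Metric.tendsto_atTop.mp (hS' a) (δ / 3) (by positivity)
  refine ⟨N, fun n hn => ?_⟩
  have hn' := hN n hn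
  simp only [dist_zero_right, norm_norm] at hn' ⊢
  calc ‖(S n - L) * a‖ = ‖(S n - S' n) * a + (S' n - L') * a + (L' - L) * a‖ := by
        congr 1; noncomm_ring
    _ ≤ ‖S n - S' n‖ * c + ‖(S' n - L') * a‖ + ‖L' - L‖ * c :=
        norm_add₃_le.trans (by gcongr <;> exact norm_mul_le _ _)
    _ < δ := by
        rw [norm_sub_rev L']
        nlinarith [mul_le_mul_of_nonneg_right (hSS' n) (norm_nonneg (a : 𝓜(ℂ, A))),
          mul_le_mul_of_nonneg_right hLL' (norm_nonneg (a : 𝓜(ℂ, A)))]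

theorem StrictTendsto.const (C : 𝓜(ℂ, A)) : StrictTendsto (fun _ => C) C := fun a => by
  simp only [sub_self, zero_mul, mul_zero, norm_zero]
  exact ⟨tendsto_const_nhds, tendsto_const_nhds⟩

theorem StrictTendsto.add (h : StrictTendsto S L) (h' : StrictTendsto S' L') :
    StrictTendsto (fun n => S n + S' n) (L + L') := by
  rw [strictTendsto_iff_rightStrictTendsto_and_star] at *
  simpa only [star_add] using ⟨h.1.add h'.1, h.2.add h'.2⟩

theorem StrictTendsto.star (h : StrictTendsto S L) :
    StrictTendsto (fun n => star (S n)) (star L) := by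
  rw [strictTendsto_iff_rightStrictTendsto_and_star] at *
  simpa only [star_star] using h.symm

theorem StrictTendsto.mul (h : StrictTendsto S L) (h' : StrictTendsto S' L') {M M' : ℝ}
    (hM : ∀ n, ‖S n‖ ≤ M) (hM' : ∀ n, ‖S' n‖ ≤ M') :
    StrictTendsto (fun n => S n * S' n) (L * L') := by
  rw [strictTendsto_iff_rightStrictTendsto_and_star] at *
  simpa only [star_mul] using ⟨h.1.mul h'.1 hM, h'.2.mul h.2 (M := M') (by simpa using hM')⟩

theorem StrictTendsto.of_uniform_approx
    (h : ∀ ε > 0, ∃ S' L', StrictTendsto S' L' ∧ (∀ n, ‖S n - S' n‖ ≤ ε) ∧ ‖L - L'‖ ≤ ε) :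
    StrictTendsto S L := by
  rw [strictTendsto_iff_rightStrictTendsto_and_star]
  constructor <;> refine RightStrictTendsto.of_uniform_approx fun ε hε => ?_
  all_goals
    obtain ⟨S', L', hS', hSS', hLL'⟩ := h ε hε
    rw [strictTendsto_iff_rightStrictTendsto_and_star] at hS'
  · exact ⟨S', L', hS'.1, hSS', hLL'⟩
  · exact ⟨_, _, hS'.2, fun n => by simpa only [← star_sub, norm_star] using hSS' n,
    by simpa only [← star_sub, norm_star]⟩

theorem StrictTendsto.apply_of_apply_id {K : Set ℂ} [CompactSpace K]
    {φ : ℕ → C(K, ℂ) →⋆ₐ[ℂ] 𝓜(ℂ, A)} {ψ : C(K, ℂ) →⋆ₐ[ℂ] 𝓜(ℂ, A)}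
    (h : StrictTendsto (fun n => φ n (.restrict K (.id ℂ))) (ψ (.restrict K (.id ℂ))))
    (g : C(K, ℂ)) : StrictTendsto (fun n => φ n g) (ψ g) := by
  induction g using ContinuousMap.induction_on_of_compact with
  | const r =>
    have hr : ContinuousMap.const K r = algebraMap ℂ C(K, ℂ) r := rfl
    simpa only [hr, AlgHomClass.commutes] using StrictTendsto.const _
  | id => exact h
  | star_id => simpa only [map_star] using h.star
  | add g₁ g₂ h₁ h₂ => simpa only [map_add] using h₁.add h₂
  | mul g₁ g₂ h₁ h₂ =>
    simpa only [map_mul] using h₁.mul h₂ (fun n => NonUnitalStarAlgHom.norm_apply_le (φ n) g₁)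
      (fun n => NonUnitalStarAlgHom.norm_apply_le (φ n) g₂)
  | frequently g hg =>
    refine StrictTendsto.of_uniform_approx fun ε hε => ?_
    obtain ⟨g', hg', hgg'⟩ := (hg.and_eventually (Metric.closedBall_mem_nhds g hε)).exists
    rw [dist_comm, dist_eq_norm] at hgg'
    have hclose (χ : C(K, ℂ) →⋆ₐ[ℂ] 𝓜(ℂ, A)) : ‖χ g - χ g'‖ ≤ ε := by
      rw [← map_sub]
      exact (NonUnitalStarAlgHom.norm_apply_le χ _).trans hgg'
    exact ⟨_, _, hg', fun n => hclose (φ n), hclose ψ⟩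

end StrictTendsto

theorem cfc_eq_cfcHomSuperset {R A : Type*} {p : A → Prop} [CommSemiring R] [StarRing R]
    [MetricSpace R] [IsTopologicalSemiring R] [ContinuousStar R] [Ring A] [StarRing A]
    [TopologicalSpace A] [Algebra R A] [ContinuousFunctionalCalculus R A p]
    {f : R → R} {a : A} {s : Set R} (ha : p a) (hs : spectrum R a ⊆ s) (hf : ContinuousOn f s) :
    cfc f a = cfcHomSuperset ha hs ⟨s.domRestrict f, hf.domRestrict⟩ := by
  rw [cfcHomSuperset_apply, cfc_apply f a ha (hf.mono hs)]
  rfl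

theorem stmt_15_general {A : Type*} [NonUnitalCStarAlgebra A]
    (T : ℕ → 𝓜(ℂ, A)) (L : 𝓜(ℂ, A))
    (hTn : ∀ n, IsStarNormal (T n)) (hLn : IsStarNormal L)
    (K : Set ℂ) (hK : IsCompact K)
    (hspec : ∀ n, spectrum ℂ (T n) ⊆ K) (hspecL : spectrum ℂ L ⊆ K)
    (hstrict : StrictTendsto T L) (f : ℂ → ℂ) (hf : ContinuousOn f K) :
    StrictTendsto (fun n => cfc f (T n)) (cfc f L) := by
  have : CompactSpace K := isCompact_iff_compactSpace.mp hK
  simp only [cfc_eq_cfcHomSuperset (hTn _) (hspec _) hf, cfc_eq_cfcHomSuperset hLn hspecL hf]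
  refine StrictTendsto.apply_of_apply_id ?_ _
  simpa only [cfcHomSuperset_id] using hstrict

theorem stmt_15 {A : Type*} [NonUnitalCStarAlgebra A] (hσ : SigmaUnital A)
    (T : ℕ → 𝓜(ℂ, A)) (L : 𝓜(ℂ, A))
    (hTn : ∀ n, IsStarNormal (T n)) (hLn : IsStarNormal L)
    (K : Set ℂ) (hK : IsCompact K)
    (hspec : ∀ n, spectrum ℂ (T n) ⊆ K) (hspecL : spectrum ℂ L ⊆ K)
    (hstrict : StrictTendsto T L) (f : ℂ → ℂ) (hf : ContinuousOn f K) :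
    StrictTendsto (fun n => cfc f (T n)) (cfc f L) :=
  stmt_15_general T L hTn hLn K hK hspec hspecL hstrict f hf
end
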